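/- arXiv:2011.05929 — 2 statements merged into one kernel-verified Lean document; each statement's English description precedes it below -/
import Mathlib

section
/- Let J be uniformly distributed on {1,...,n} and independent of (S, R, X^n, Y^n). Setting V = (X_1,...,X_{J-1}, Y_{J+1},...,Y_n, R, J) and U = (S, V), it holds that I(S;X^n|R) - I(S;Y^n|R) = n·[ I(U;X_J|V) - I(U;Y_J|V) ]. -/
/-!
Interpolate between `(X^n, R)` and `(Y^n, R)` through the hybrids
`H_k = (X_1, …, X_k, Y_{k+1}, …, Y_n, R)`. Entropy only sees the partition of `Ω` into level
sets, and `(X_J, V)` induces the same partition as `(J, H_{J+1})`, while `(Y_J, V)` induces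
that of `(J, H_J)`; the same holds with `S` adjoined. As `J` is uniform and
independent of everything else, `n (H(X_J, V) - H(Y_J, V)) = ∑_j (H(H_{j+1}) - H(H_j))`, which
telescopes to `H(X^n, R) - H(Y^n, R)`. Both differences of conditional mutual informations
reduce to such entropy differences, since the terms `H(S, R)` and `H(U, V)` cancel.
-/

set_option synthInstance.maxSize 512
set_option maxHeartbeats 1000000

open Real Finset

namespace CRG

variable {Ω : Type*} [Fintype Ω]

/-- Probability that the random variable `X` takes the value `x`, under the pmf `p` on `Ω`. -/
noncomputable def pr {α : Type*} [DecidableEq α] (p : Ω → ℝ) (X : Ω → α) (x : α) : ℝ :=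
  ∑ ω, if X ω = x then p ω else 0

/-- Shannon entropy (in nats) of the random variable `X` under the pmf `p`. -/
noncomputable def ent {α : Type*} [Fintype α] [DecidableEq α] (p : Ω → ℝ) (X : Ω → α) : ℝ :=
  ∑ x, Real.negMulLog (pr p X x)

/-- Conditional entropy `H(X|Y)`. -/
noncomputable def condEnt {α β : Type*} [Fintype α] [DecidableEq α] [Fintype β] [DecidableEq β]
    (p : Ω → ℝ) (X : Ω → α) (Y : Ω → β) : ℝ :=
  ent p (fun ω => (X ω, Y ω)) - ent p Y

/-- Mutual information `I(X;Y)`. -/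
noncomputable def mi {α β : Type*} [Fintype α] [DecidableEq α] [Fintype β] [DecidableEq β]
    (p : Ω → ℝ) (X : Ω → α) (Y : Ω → β) : ℝ :=
  ent p X + ent p Y - ent p (fun ω => (X ω, Y ω))

/-- Conditional mutual information `I(X;Y|Z)`. -/
noncomputable def cmi {α β γ : Type*} [Fintype α] [DecidableEq α] [Fintype β] [DecidableEq β]
    [Fintype γ] [DecidableEq γ] (p : Ω → ℝ) (X : Ω → α) (Y : Ω → β) (Z : Ω → γ) : ℝ :=
  condEnt p X Z + condEnt p Y Z - condEnt p (fun ω => (X ω, Y ω)) Z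

/-- `A` and `C` are conditionally independent given `B` (equivalently, the Markov chain
`A — B — C` holds). -/
def CondIndep {α β γ : Type*} [DecidableEq α] [DecidableEq β] [DecidableEq γ]
    (p : Ω → ℝ) (A : Ω → α) (B : Ω → β) (C : Ω → γ) : Prop :=
  ∀ a b c, pr p (fun ω => (A ω, B ω, C ω)) (a, b, c) * pr p B b =
    pr p (fun ω => (A ω, B ω)) (a, b) * pr p (fun ω => (B ω, C ω)) (b, c)

end CRG

open CRG

/-- The auxiliary random variable `V = (X_1,…,X_{J-1}, Y_{J+1},…,Y_n, R, J)`, where the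
variable-length prefix/suffix is encoded by masking the irrelevant coordinates by `none`. -/
def maskV {Ω α β ρ : Type*} {n : ℕ} (X : Fin n → Ω → α) (Y : Fin n → Ω → β)
    (R : Ω → ρ) (J : Ω → Fin n) (ω : Ω) :
    (Fin n → Option α) × (Fin n → Option β) × ρ × Fin n :=
  ((fun j => if j < J ω then some (X j ω) else none),
   (fun j => if J ω < j then some (Y j ω) else none), R ω, J ω)

namespace CRG

variable {Ω : Type*} [Fintype Ω] (p : Ω → ℝ)

theorem pr_comp {μ γ : Type*} [Fintype μ] [DecidableEq μ] [DecidableEq γ]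
    (M : Ω → μ) (f : μ → γ) (c : γ) :
    pr p (fun ω => f (M ω)) c = ∑ m, if f m = c then pr p M m else 0 := by
  simp only [pr]
  rw [← Finset.sum_fiberwise Finset.univ M]
  refine Finset.sum_congr rfl fun m _ => ?_
  split_ifs with h
  · conv_rhs => rw [← Finset.sum_filter]
    exact Finset.sum_congr rfl fun ω hω => by simp [(Finset.mem_filter.1 hω).2, h]
  · exact Finset.sum_eq_zero fun ω hω => by simp [(Finset.mem_filter.1 hω).2, h]

theorem sum_pr {γ : Type*} [Fintype γ] [DecidableEq γ] (X : Ω → γ) :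
    ∑ c, pr p X c = ∑ ω, p ω := by
  simp only [pr]
  rw [Finset.sum_comm]
  simp

theorem ent_pair_comm {γ δ : Type*} [Fintype γ] [DecidableEq γ] [Fintype δ] [DecidableEq δ]
    (A : Ω → γ) (B : Ω → δ) :
    ent p (fun ω => (B ω, A ω)) = ent p (fun ω => (A ω, B ω)) := by
  refine Fintype.sum_equiv (Equiv.prodComm δ γ) _ _ fun c => ?_
  simp only [pr, Equiv.prodComm_apply, Prod.ext_iff, Prod.fst_swap, Prod.snd_swap, and_comm]

theorem ent_pair_eq_left {γ δ : Type*} [Fintype γ] [DecidableEq γ] [Fintype δ] [DecidableEq δ]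
    {A : Ω → γ} {B : Ω → δ} (h : ∀ ω ω', A ω = A ω' → B ω = B ω') :
    ent p (fun ω => (A ω, B ω)) = ent p A := by
  rw [ent, ent, Fintype.sum_prod_type]
  refine Finset.sum_congr rfl fun a _ => ?_
  by_cases ha : ∃ ω₀, A ω₀ = a
  · obtain ⟨ω₀, rfl⟩ := ha
    have hpr : ∀ b, pr p (fun ω => (A ω, B ω)) (A ω₀, b) =
        if B ω₀ = b then pr p A (A ω₀) else 0 := by
      intro b
      split_ifs with hb
      · refine Finset.sum_congr rfl fun ω _ => ?_
        simp only [Prod.mk.injEq]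
        exact if_congr ⟨And.left, fun hω => ⟨hω, hb ▸ h ω ω₀ hω⟩⟩ rfl rfl
      · refine Finset.sum_eq_zero fun ω _ => if_neg ?_
        intro hω
        exact hb ((h ω₀ ω (congrArg Prod.fst hω).symm).trans (congrArg Prod.snd hω))
    simp only [hpr, apply_ite negMulLog, negMulLog_zero, Finset.sum_ite_eq, Finset.mem_univ, if_true]
  · push Not at ha
    have hpr : ∀ b, pr p (fun ω => (A ω, B ω)) (a, b) = 0 := fun b =>
      Finset.sum_eq_zero fun ω _ => if_neg fun hω => ha ω (congrArg Prod.fst hω)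
    have hpa : pr p A a = 0 := Finset.sum_eq_zero fun ω _ => if_neg (ha ω)
    simp [hpr, hpa]

theorem ent_eq_of_eq_iff {γ δ : Type*} [Fintype γ] [DecidableEq γ] [Fintype δ] [DecidableEq δ]
    {A : Ω → γ} {B : Ω → δ} (h : ∀ ω ω', A ω = A ω' ↔ B ω = B ω') :
    ent p A = ent p B := by
  rw [← ent_pair_eq_left p fun ω ω' => (h ω ω').1, ent_pair_comm,
    ent_pair_eq_left p fun ω ω' => (h ω ω').2]

theorem cmi_sub_cmi {γ δ δ' κ : Type*} [Fintype γ] [DecidableEq γ] [Fintype δ] [DecidableEq δ]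
    [Fintype δ'] [DecidableEq δ'] [Fintype κ] [DecidableEq κ]
    (A : Ω → γ) (B : Ω → δ) (B' : Ω → δ') (C : Ω → κ) :
    cmi p A B C - cmi p A B' C =
      (ent p (fun ω => (B ω, C ω)) - ent p (fun ω => ((A ω, B ω), C ω))) -
        (ent p (fun ω => (B' ω, C ω)) - ent p (fun ω => ((A ω, B' ω), C ω))) := by
  simp only [cmi, condEnt]
  ring

variable {n : ℕ}

def UniformIndep {μ : Type*} [DecidableEq μ] (J : Ω → Fin n) (W : Ω → μ) : Prop :=
  ∀ k w, pr p (fun ω => (J ω, W ω)) (k, w) = 1 / (n : ℝ) * pr p W w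

namespace UniformIndep

variable {p} {J : Ω → Fin n}

theorem comp {μ ν : Type*} [Fintype μ] [DecidableEq μ] [DecidableEq ν] {W : Ω → μ}
    (h : UniformIndep p J W) (f : μ → ν) : UniformIndep p J (fun ω => f (W ω)) := by
  intro k c
  rw [show (fun ω => (J ω, f (W ω))) = fun ω => Prod.map id f (J ω, W ω) from rfl,
    pr_comp, pr_comp, Finset.mul_sum, Fintype.sum_prod_type, Finset.sum_eq_single k]
  · refine Finset.sum_congr rfl fun w _ => ?_
    simp [h k w]
  · intro k' _ hk'
    exact Finset.sum_eq_zero fun w _ => if_neg fun hkw => hk' (congrArg Prod.fst hkw)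
  · simp

theorem pr_pair_apply {δ : Type*} [Fintype δ] [DecidableEq δ] {Z : Fin n → Ω → δ}
    (h : UniformIndep p J (fun ω j => Z j ω)) (j : Fin n) (z : δ) :
    pr p (fun ω => (J ω, Z (J ω) ω)) (j, z) = 1 / (n : ℝ) * pr p (Z j) z := by
  rw [← h.comp (fun w => w j) j z]
  refine Finset.sum_congr rfl fun ω _ => ?_
  by_cases hj : J ω = j <;> simp [hj]

theorem ent_pair {δ : Type*} [Fintype δ] [DecidableEq δ] {Z : Fin n → Ω → δ}
    (hp1 : ∑ ω, p ω = 1) (h : UniformIndep p J (fun ω j => Z j ω)) :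
    ent p (fun ω => (J ω, Z (J ω) ω)) = log n + 1 / (n : ℝ) * ∑ j, ent p (Z j) := by
  obtain rfl | hn := eq_or_ne n 0
  · simp [ent]
  have hlog : negMulLog (1 / (n : ℝ)) = 1 / (n : ℝ) * log n := by
    simp [negMulLog, Real.log_inv]
  have hrow : ∀ j, ∑ z, negMulLog (pr p (fun ω => (J ω, Z (J ω) ω)) (j, z)) =
      1 / (n : ℝ) * log n + 1 / (n : ℝ) * ent p (Z j) := by
    intro j
    simp only [h.pr_pair_apply, negMulLog_mul, Finset.sum_add_distrib, ← Finset.sum_mul,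
      ← Finset.mul_sum, sum_pr, hp1, one_mul, hlog, ent]
  rw [ent, Fintype.sum_prod_type, Finset.sum_congr rfl fun j _ => hrow j, Finset.sum_add_distrib,
    Finset.sum_const, Finset.card_univ, Fintype.card_fin, nsmul_eq_mul, ← Finset.mul_sum]
  field_simp

theorem mul_ent_sub_ent {δ γ γ' ε ε' : Type*} [Fintype δ] [DecidableEq δ] [Fintype γ]
    [DecidableEq γ] [Fintype γ'] [DecidableEq γ'] [Fintype ε] [DecidableEq ε] [Fintype ε']
    [DecidableEq ε'] (hp1 : ∑ ω, p ω = 1) {Z : ℕ → Ω → δ}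
    (h : UniformIndep p J (fun ω (k : Fin (n + 1)) => Z k ω))
    {T : Ω → γ} {T' : Ω → γ'} {E : Ω → ε} {E' : Ω → ε'}
    (hT : ∀ ω ω', T ω = T ω' ↔ (J ω, Z (J ω + 1) ω) = (J ω', Z (J ω' + 1) ω'))
    (hT' : ∀ ω ω', T' ω = T' ω' ↔ (J ω, Z (J ω) ω) = (J ω', Z (J ω') ω'))
    (hE : ∀ ω ω', E ω = E ω' ↔ Z n ω = Z n ω') (hE' : ∀ ω ω', E' ω = E' ω' ↔ Z 0 ω = Z 0 ω') :
    n * (ent p T - ent p T') = ent p E - ent p E' := by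
  rw [ent_eq_of_eq_iff p hE, ent_eq_of_eq_iff p hE']
  obtain rfl | hn := eq_or_ne n 0
  · simp
  have hsucc : UniformIndep p J (fun ω (j : Fin n) => Z (j + 1) ω) :=
    h.comp fun z (j : Fin n) => z j.succ
  have hcast : UniformIndep p J (fun ω (j : Fin n) => Z j ω) :=
    h.comp fun z (j : Fin n) => z j.castSucc
  have htele : ∑ j : Fin n, (ent p (Z (j + 1)) - ent p (Z j)) = ent p (Z n) - ent p (Z 0) :=
    (Fin.sum_univ_eq_sum_range (fun k => ent p (Z (k + 1)) - ent p (Z k)) n).trans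
      (Finset.sum_range_sub (fun k => ent p (Z k)) n)
  rw [ent_eq_of_eq_iff p hT, ent_eq_of_eq_iff p hT', hsucc.ent_pair hp1, hcast.ent_pair hp1,
    ← htele, Finset.sum_sub_distrib]
  field_simp
  ring

end UniformIndep

end CRG

section Hybrid

variable {n : ℕ} {α β : Type*}

theorem forall_le_iff_and_forall_lt {ι : Type*} [PartialOrder ι] {P : ι → Prop} {j : ι} :
    (∀ i ≤ j, P i) ↔ P j ∧ ∀ i < j, P i := by
  simp only [le_iff_lt_or_eq, or_imp, forall_and, forall_eq, and_comm]

theorem forall_ge_iff_and_forall_gt {ι : Type*} [PartialOrder ι] {P : ι → Prop} {j : ι} :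
    (∀ i, j ≤ i → P i) ↔ P j ∧ ∀ i, j < i → P i := by
  simp only [le_iff_lt_or_eq, or_imp, forall_and, forall_eq', and_comm]

theorem ite_some_none_funext_iff {ι γ : Type*} {P : ι → Prop} [DecidablePred P] {f g : ι → γ} :
    ((fun i => if P i then some (f i) else none) = fun i => if P i then some (g i) else none) ↔
      ∀ i, P i → f i = g i := by
  simp only [funext_iff]
  refine forall_congr' fun i => ?_
  by_cases hi : P i <;> simp [hi]

/-- The hybrid sequence `(x₁, …, x_k, y_{k+1}, …, y_n)`. -/
def hybridSeq (k : ℕ) (x : Fin n → α) (y : Fin n → β) : Fin n → α ⊕ β :=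
  fun i => if (i : ℕ) < k then .inl (x i) else .inr (y i)

theorem hybridSeq_eq_iff {k : ℕ} {x x' : Fin n → α} {y y' : Fin n → β} :
    hybridSeq k x y = hybridSeq k x' y' ↔
      (∀ i : Fin n, (i : ℕ) < k → x i = x' i) ∧ ∀ i : Fin n, k ≤ (i : ℕ) → y i = y' i := by
  simp only [hybridSeq, funext_iff, ← forall_and]
  refine forall_congr' fun i => ?_
  by_cases hi : (i : ℕ) < k
  · simp [hi]
  · simp [hi, not_lt.1 hi]

theorem hybridSeq_zero_eq_iff {x x' : Fin n → α} {y y' : Fin n → β} :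
    hybridSeq 0 x y = hybridSeq 0 x' y' ↔ y = y' := by
  rw [hybridSeq_eq_iff, funext_iff]
  simp

theorem hybridSeq_self_eq_iff {x x' : Fin n → α} {y y' : Fin n → β} :
    hybridSeq n x y = hybridSeq n x' y' ↔ x = x' := by
  rw [hybridSeq_eq_iff, funext_iff]
  simp [Fin.is_lt, fun i : Fin n => not_le.2 i.is_lt]

end Hybrid

section Mask

variable {Ω α β ρ : Type*} {n : ℕ} {X : Fin n → Ω → α} {Y : Fin n → Ω → β} {R : Ω → ρ}
  {J : Ω → Fin n}

theorem maskV_eq_maskV_iff {ω ω' : Ω} :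
    maskV X Y R J ω = maskV X Y R J ω' ↔ J ω = J ω' ∧ (∀ i, i < J ω → X i ω = X i ω') ∧
      (∀ i, J ω < i → Y i ω = Y i ω') ∧ R ω = R ω' := by
  by_cases hJ : J ω = J ω'
  · simp only [maskV, hJ, Prod.mk.injEq, ite_some_none_funext_iff, and_true, true_and]
  · simp [maskV, hJ]

theorem prod_maskV_eq_iff_hybridSeq_succ {ω ω' : Ω} :
    (X (J ω) ω, maskV X Y R J ω) = (X (J ω') ω', maskV X Y R J ω') ↔
      (J ω, hybridSeq (J ω + 1) (X · ω) (Y · ω), R ω) =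
        (J ω', hybridSeq (J ω' + 1) (X · ω') (Y · ω'), R ω') := by
  rw [Prod.mk.injEq, maskV_eq_maskV_iff]
  by_cases hJ : J ω = J ω'
  · simp only [hJ, Prod.mk.injEq, hybridSeq_eq_iff, true_and, Nat.lt_add_one_iff,
      Nat.add_one_le_iff, Fin.val_fin_le, Fin.val_fin_lt, forall_le_iff_and_forall_lt]
    tauto
  · simp [hJ]

theorem prod_maskV_eq_iff_hybridSeq_succ' {σ : Type*} {S : Ω → σ} {ω ω' : Ω} :
    (((S ω, maskV X Y R J ω), X (J ω) ω), maskV X Y R J ω) =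
        (((S ω', maskV X Y R J ω'), X (J ω') ω'), maskV X Y R J ω') ↔
      (J ω, S ω, hybridSeq (J ω + 1) (X · ω) (Y · ω), R ω) =
        (J ω', S ω', hybridSeq (J ω' + 1) (X · ω') (Y · ω'), R ω') := by
  have := prod_maskV_eq_iff_hybridSeq_succ (X := X) (Y := Y) (R := R) (J := J) (ω := ω) (ω' := ω')
  simp only [Prod.mk.injEq] at this ⊢
  tauto

theorem prod_maskV_eq_iff_hybridSeq {ω ω' : Ω} :
    (Y (J ω) ω, maskV X Y R J ω) = (Y (J ω') ω', maskV X Y R J ω') ↔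
      (J ω, hybridSeq (J ω) (X · ω) (Y · ω), R ω) =
        (J ω', hybridSeq (J ω') (X · ω') (Y · ω'), R ω') := by
  rw [Prod.mk.injEq, maskV_eq_maskV_iff]
  by_cases hJ : J ω = J ω'
  · simp only [hJ, Prod.mk.injEq, hybridSeq_eq_iff, true_and, Fin.val_fin_le, Fin.val_fin_lt,
      forall_ge_iff_and_forall_gt]
    tauto
  · simp [hJ]

theorem prod_maskV_eq_iff_hybridSeq' {σ : Type*} {S : Ω → σ} {ω ω' : Ω} :
    (((S ω, maskV X Y R J ω), Y (J ω) ω), maskV X Y R J ω) =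
        (((S ω', maskV X Y R J ω'), Y (J ω') ω'), maskV X Y R J ω') ↔
      (J ω, S ω, hybridSeq (J ω) (X · ω) (Y · ω), R ω) =
        (J ω', S ω', hybridSeq (J ω') (X · ω') (Y · ω'), R ω') := by
  have := prod_maskV_eq_iff_hybridSeq (X := X) (Y := Y) (R := R) (J := J) (ω := ω) (ω' := ω')
  simp only [Prod.mk.injEq] at this ⊢
  tauto

end Mask

theorem single_letterization_general {Ω α β σA ρ : Type*} [Fintype Ω]
    [Fintype α] [DecidableEq α] [Fintype β] [DecidableEq β]
    [Fintype σA] [DecidableEq σA] [Fintype ρ] [DecidableEq ρ]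
    (p : Ω → ℝ) (hp1 : ∑ ω, p ω = 1)
    (n : ℕ) (S : Ω → σA) (R : Ω → ρ) (X : Fin n → Ω → α) (Y : Fin n → Ω → β)
    (J : Ω → Fin n)
    (hJ : ∀ (k : Fin n) (s : σA) (r : ρ) (xs : Fin n → α) (ys : Fin n → β),
      pr p (fun ω => (J ω, S ω, R ω, (fun j => X j ω), fun j => Y j ω)) (k, s, r, xs, ys) =
        (1 / (n : ℝ)) *
          pr p (fun ω => (S ω, R ω, (fun j => X j ω), fun j => Y j ω)) (s, r, xs, ys)) :
    cmi p S (fun ω (j : Fin n) => X j ω) R - cmi p S (fun ω (j : Fin n) => Y j ω) R =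
      (n : ℝ) *
        (cmi p (fun ω => (S ω, maskV X Y R J ω)) (fun ω => X (J ω) ω) (maskV X Y R J)
          - cmi p (fun ω => (S ω, maskV X Y R J ω)) (fun ω => Y (J ω) ω) (maskV X Y R J)) := by
  have hM : UniformIndep p J (fun ω => (S ω, R ω, (fun j => X j ω), fun j => Y j ω)) := by
    rintro k ⟨s, r, xs, ys⟩
    exact hJ k s r xs ys
  have hX := (hM.comp fun m (k : Fin (n + 1)) =>
      (hybridSeq k m.2.2.1 m.2.2.2, m.2.1)).mul_ent_sub_ent hp1
    (Z := fun k ω => (hybridSeq k (X · ω) (Y · ω), R ω))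
    (T := fun ω => (X (J ω) ω, maskV X Y R J ω)) (T' := fun ω => (Y (J ω) ω, maskV X Y R J ω))
    (E := fun ω => ((fun j => X j ω), R ω)) (E' := fun ω => ((fun j => Y j ω), R ω))
    (fun _ _ => prod_maskV_eq_iff_hybridSeq_succ) (fun _ _ => prod_maskV_eq_iff_hybridSeq)
    (fun _ _ => by simp only [Prod.mk.injEq, hybridSeq_self_eq_iff])
    (fun _ _ => by simp only [Prod.mk.injEq, hybridSeq_zero_eq_iff])
  have hS := set_option synthInstance.maxSize 1024 in (hM.comp fun m (k : Fin (n + 1)) =>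
      (m.1, hybridSeq k m.2.2.1 m.2.2.2, m.2.1)).mul_ent_sub_ent hp1
    (Z := fun k ω => (S ω, hybridSeq k (X · ω) (Y · ω), R ω))
    (T := fun ω => (((S ω, maskV X Y R J ω), X (J ω) ω), maskV X Y R J ω))
    (T' := fun ω => (((S ω, maskV X Y R J ω), Y (J ω) ω), maskV X Y R J ω))
    (E := fun ω => ((S ω, fun j => X j ω), R ω)) (E' := fun ω => ((S ω, fun j => Y j ω), R ω))
    (fun _ _ => prod_maskV_eq_iff_hybridSeq_succ') (fun _ _ => prod_maskV_eq_iff_hybridSeq')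
    (fun _ _ => by simp only [Prod.mk.injEq, hybridSeq_self_eq_iff, and_assoc])
    (fun _ _ => by simp only [Prod.mk.injEq, hybridSeq_zero_eq_iff, and_assoc])
  rw [cmi_sub_cmi, cmi_sub_cmi]
  linarith

/-- if `J` is uniform on `{1,…,n}` and independent of `(S,R,X^n,Y^n)`,
`V = (X^{J-1}, Y_{J+1}^n, R, J)` and `U = (S,V)`, then
`I(S;X^n|R) - I(S;Y^n|R) = n·[I(U;X_J|V) - I(U;Y_J|V)]`. -/
theorem single_letterization {Ω α β σA ρ : Type*} [Fintype Ω]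
    [Fintype α] [DecidableEq α] [Fintype β] [DecidableEq β]
    [Fintype σA] [DecidableEq σA] [Fintype ρ] [DecidableEq ρ]
    (p : Ω → ℝ) (hp : ∀ ω, 0 ≤ p ω) (hp1 : ∑ ω, p ω = 1)
    (n : ℕ) (S : Ω → σA) (R : Ω → ρ) (X : Fin n → Ω → α) (Y : Fin n → Ω → β)
    (J : Ω → Fin n)
    (hJ : ∀ (k : Fin n) (s : σA) (r : ρ) (xs : Fin n → α) (ys : Fin n → β),
      pr p (fun ω => (J ω, S ω, R ω, (fun j => X j ω), fun j => Y j ω)) (k, s, r, xs, ys) =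
        (1 / (n : ℝ)) *
          pr p (fun ω => (S ω, R ω, (fun j => X j ω), fun j => Y j ω)) (s, r, xs, ys)) :
    cmi p S (fun ω (j : Fin n) => X j ω) R - cmi p S (fun ω (j : Fin n) => Y j ω) R =
      (n : ℝ) *
        (cmi p (fun ω => (S ω, maskV X Y R J ω)) (fun ω => X (J ω) ω) (maskV X Y R J)
          - cmi p (fun ω => (S ω, maskV X Y R J ω)) (fun ω => Y (J ω) ω) (maskV X Y R J)) :=
  single_letterization_general p hp1 n S R X Y J hJ
end

section
/- Euclidean projection onto the probability simplex: given z ∈ ℝ^D, let w be z sorted in decreasing order, γ = max{ 1 ≤ j ≤ D : w_j + (1 − Σ_{i=1}^j w_i)/j > 0 }, and κ = (1/γ)·(1 − Σ_{i=1}^γ w_i). Then the vector θ with θ_i = max{z_i + κ, 0} is the unique minimizer of ||θ − z||₂ over the probability simplex {θ ∈ ℝ^D : θ ≥ 0, Σ_i θ_i = 1}. -/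
open Real Finset

/-!
With `p = (z + κ)₊` and any `κ` making `∑ p = 1`, complementary slackness gives
`κ (θ - p) ≤ (θ - p)(p - z)` coordinatewise for every `θ ≥ 0`; summing over a `θ` in the simplex
kills the left side, so the cross term of `‖θ - z‖² = ‖p - z‖² + ‖θ - p‖² + 2⟨θ - p, p - z⟩` is
nonnegative, which yields both minimality and uniqueness. For the sorted `w`, the identity
`(j + 2)(w_{j+1} + κ_{j+1}) = (j + 1)(w_{j+1} + κ_j)` (indices from `0`) and the maximality of
`g` give `w_j + κ_g ≤ 0` exactly for `j > g`, so `∑ (w + κ_g)₊ = ∑_{j ≤ g} (w_j + κ_g) = 1`.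
-/

lemma mul_sub_max_le {t : ℝ} (ht : 0 ≤ t) (x κ : ℝ) :
    κ * (t - max (x + κ) 0) ≤ (t - max (x + κ) 0) * (max (x + κ) 0 - x) := by
  rcases le_total 0 (x + κ) with h | h
  · rw [max_eq_left h]
    linarith
  · rw [max_eq_right h]
    nlinarith

section Thresholding

variable {ι : Type*} [Fintype ι]

def shiftedPosPart (z : ι → ℝ) (κ : ℝ) : ι → ℝ := fun i => max (z i + κ) 0

theorem sum_sq_sub_shiftedPosPart_add_le {z θ : ι → ℝ} {κ : ℝ}
    (hκ : ∑ i, shiftedPosPart z κ i = 1) (hθ : ∀ i, 0 ≤ θ i) (hθ1 : ∑ i, θ i = 1) :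
    ∑ i, (shiftedPosPart z κ i - z i) ^ 2 + ∑ i, (θ i - shiftedPosPart z κ i) ^ 2 ≤
      ∑ i, (θ i - z i) ^ 2 := by
  set p := shiftedPosPart z κ
  have hcross : 0 ≤ ∑ i, (θ i - p i) * (p i - z i) :=
    calc 0 = κ * ∑ i, (θ i - p i) := by rw [sum_sub_distrib, hθ1, hκ, sub_self, mul_zero]
      _ = ∑ i, κ * (θ i - p i) := mul_sum _ _ _
      _ ≤ ∑ i, (θ i - p i) * (p i - z i) :=
        sum_le_sum fun i _ => mul_sub_max_le (hθ i) (z i) κ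
  have hexpand : ∑ i, (θ i - z i) ^ 2 = ∑ i, (p i - z i) ^ 2 + ∑ i, (θ i - p i) ^ 2 +
      2 * ∑ i, (θ i - p i) * (p i - z i) := by
    rw [← sum_add_distrib, mul_sum, ← sum_add_distrib]
    exact sum_congr rfl fun i _ => by ring
  linarith

theorem sum_sq_sub_shiftedPosPart_le {z θ : ι → ℝ} {κ : ℝ}
    (hκ : ∑ i, shiftedPosPart z κ i = 1) (hθ : ∀ i, 0 ≤ θ i) (hθ1 : ∑ i, θ i = 1) :
    ∑ i, (shiftedPosPart z κ i - z i) ^ 2 ≤ ∑ i, (θ i - z i) ^ 2 := by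
  have hpyth := sum_sq_sub_shiftedPosPart_add_le hκ hθ hθ1
  have hnonneg : 0 ≤ ∑ i, (θ i - shiftedPosPart z κ i) ^ 2 := sum_nonneg fun i _ => sq_nonneg _
  linarith

theorem eq_shiftedPosPart_of_sum_sq_sub_eq {z θ : ι → ℝ} {κ : ℝ}
    (hκ : ∑ i, shiftedPosPart z κ i = 1) (hθ : ∀ i, 0 ≤ θ i) (hθ1 : ∑ i, θ i = 1)
    (heq : ∑ i, (θ i - z i) ^ 2 = ∑ i, (shiftedPosPart z κ i - z i) ^ 2) :
    θ = shiftedPosPart z κ := by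
  have hle := sum_sq_sub_shiftedPosPart_add_le hκ hθ hθ1
  have hzero : ∑ i, (θ i - shiftedPosPart z κ i) ^ 2 = 0 :=
    le_antisymm (by linarith) (sum_nonneg fun i _ => sq_nonneg _)
  funext i
  have := (sum_eq_zero_iff_of_nonneg fun i _ => sq_nonneg _).1 hzero i (mem_univ i)
  exact sub_eq_zero.1 (pow_eq_zero_iff two_ne_zero |>.1 this)

end Thresholding

section SortedThreshold

variable {D : ℕ} (w : Fin D → ℝ)

noncomputable def simplexShift (j : Fin D) : ℝ :=
  (1 - ∑ i ∈ univ.filter (· ≤ j), w i) / (j.1 + 1 : ℝ)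

lemma sum_filter_le_of_val_eq_succ {j s : Fin D} (hs : s.1 = j.1 + 1) :
    ∑ i ∈ univ.filter (· ≤ s), w i = ∑ i ∈ univ.filter (· ≤ j), w i + w s := by
  have hfilter : univ.filter (· ≤ s) = insert s (univ.filter (· ≤ j)) := by
    ext i
    simp only [mem_filter, mem_univ, true_and, mem_insert, Fin.le_def, Fin.ext_iff]
    omega
  rw [hfilter, sum_insert (by simp only [mem_filter, Fin.le_def, hs]; omega), add_comm]

lemma succ_mul_add_simplexShift {j s : Fin D} (hs : s.1 = j.1 + 1) :
    ((s.1 : ℝ) + 1) * (w s + simplexShift w s) = ((j.1 : ℝ) + 1) * (w s + simplexShift w j) := by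
  have hs' : (s.1 : ℝ) = j.1 + 1 := by exact_mod_cast hs
  unfold simplexShift
  rw [sum_filter_le_of_val_eq_succ w hs, hs']
  field_simp
  ring

variable {w} {g : Fin D}

/-- Only the successor of `g` needs maximality of `g`; sortedness handles the larger indices. -/
lemma add_simplexShift_nonpos_of_lt (hw : Antitone w)
    (hgmax : ∀ j, 0 < w j + simplexShift w j → j ≤ g) {j : Fin D} (hj : g < j) :
    w j + simplexShift w g ≤ 0 := by
  have hlt : g.1 + 1 < D := by have := j.2; rw [Fin.lt_def] at hj; omega
  set s : Fin D := ⟨g.1 + 1, hlt⟩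
  have hs : s.1 = g.1 + 1 := rfl
  have hs_nonpos : w s + simplexShift w s ≤ 0 :=
    not_lt.1 fun h => absurd (hgmax s h) (by simp [Fin.le_def, hs])
  have hscaled := succ_mul_add_simplexShift w hs
  have hsg : w s + simplexShift w g ≤ 0 := by
    have hmul : ((g.1 : ℝ) + 1) * (w s + simplexShift w g) ≤ 0 := by
      rw [← hscaled]; exact mul_nonpos_of_nonneg_of_nonpos (by positivity) hs_nonpos
    exact nonpos_of_mul_nonpos_right hmul (by positivity)
  have hjs : w j ≤ w s := hw (by rw [Fin.le_def, Fin.lt_def] at *; omega)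
  linarith

theorem sum_max_add_simplexShift_eq_one (hw : Antitone w) (hg : 0 < w g + simplexShift w g)
    (hgmax : ∀ j, 0 < w j + simplexShift w j → j ≤ g) :
    ∑ j, max (w j + simplexShift w g) 0 = 1 := by
  set κ := simplexShift w g
  rw [← sum_filter_add_sum_filter_not univ (· ≤ g)]
  have hhead :
      ∑ j ∈ univ.filter (· ≤ g), max (w j + κ) 0 = ∑ j ∈ univ.filter (· ≤ g), (w j + κ) :=
    sum_congr rfl fun j hj => max_eq_left (by linarith [hw (mem_filter.1 hj).2])
  have htail : ∑ j ∈ univ.filter (fun j => ¬ j ≤ g), max (w j + κ) 0 = 0 :=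
    sum_eq_zero fun j hj =>
      max_eq_right (add_simplexShift_nonpos_of_lt hw hgmax (not_le.1 (mem_filter.1 hj).2))
  rw [hhead, htail, add_zero, sum_add_distrib, sum_const, filter_ge_eq_Iic, Fin.card_Iic,
    nsmul_eq_mul, ← filter_ge_eq_Iic]
  simp only [κ, simplexShift]
  push_cast
  field_simp
  ring

end SortedThreshold

theorem projection_onto_simplex_general (D : ℕ) (z : Fin D → ℝ)
    (e : Equiv.Perm (Fin D)) (w : Fin D → ℝ) (hw : ∀ i, w i = z (e i))
    (hsort : ∀ i j : Fin D, i ≤ j → w j ≤ w i)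
    (g : Fin D)
    (hg : 0 < w g + (1 - ∑ i ∈ Finset.univ.filter (· ≤ g), w i) / (g.1 + 1 : ℝ))
    (hgmax : ∀ j : Fin D,
      0 < w j + (1 - ∑ i ∈ Finset.univ.filter (· ≤ j), w i) / (j.1 + 1 : ℝ) → j ≤ g) :
    (∀ i, 0 ≤ max (z i + (1 - ∑ i ∈ Finset.univ.filter (· ≤ g), w i) / (g.1 + 1 : ℝ)) 0) ∧
    (∑ i, max (z i + (1 - ∑ i ∈ Finset.univ.filter (· ≤ g), w i) / (g.1 + 1 : ℝ)) 0) = 1 ∧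
    (∀ θ' : Fin D → ℝ, (∀ i, 0 ≤ θ' i) → (∑ i, θ' i) = 1 →
      Real.sqrt (∑ i, (max (z i + (1 - ∑ i ∈ Finset.univ.filter (· ≤ g), w i) /
            (g.1 + 1 : ℝ)) 0 - z i) ^ 2) ≤
        Real.sqrt (∑ i, (θ' i - z i) ^ 2)) ∧
    (∀ θ' : Fin D → ℝ, (∀ i, 0 ≤ θ' i) → (∑ i, θ' i) = 1 →
      Real.sqrt (∑ i, (θ' i - z i) ^ 2) =
        Real.sqrt (∑ i, (max (z i + (1 - ∑ i ∈ Finset.univ.filter (· ≤ g), w i) /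
            (g.1 + 1 : ℝ)) 0 - z i) ^ 2) →
      θ' = fun i => max (z i + (1 - ∑ i ∈ Finset.univ.filter (· ≤ g), w i) /
            (g.1 + 1 : ℝ)) 0) := by
  have hsum : ∑ i, shiftedPosPart z (simplexShift w g) i = 1 := by
    rw [← sum_max_add_simplexShift_eq_one hsort hg hgmax, ← Equiv.sum_comp e]
    simp only [shiftedPosPart, hw]
  refine ⟨fun i => le_max_right _ _, hsum, fun θ hθ hθ1 => ?_, fun θ hθ hθ1 heq => ?_⟩
  · exact sqrt_le_sqrt (sum_sq_sub_shiftedPosPart_le hsum hθ hθ1)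
  · refine eq_shiftedPosPart_of_sum_sq_sub_eq hsum hθ hθ1 ?_
    exact (sqrt_inj (sum_nonneg fun i _ => sq_nonneg _) (sum_nonneg fun i _ => sq_nonneg _)).1 heq

/-- Euclidean projection onto the probability simplex: given
`z ∈ ℝ^D`, let `w` be `z` sorted in decreasing order (via a permutation `e`), let
`γ ∈ {1,…,D}` (here `γ = g.1 + 1` for `g : Fin D`) be the largest index `j` such that
`w_j + (1 − ∑_{i=1}^j w_i)/j > 0`, and let `κ = (1/γ)·(1 − ∑_{i=1}^γ w_i)`. Then `θ`
with `θ_i = max (z_i + κ) 0` is the unique minimizer of `‖θ − z‖₂` over the probability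
simplex `{θ : θ ≥ 0, ∑ θ_i = 1}`. -/
theorem projection_onto_simplex (D : ℕ) (hD : 1 ≤ D) (z : Fin D → ℝ)
    (e : Equiv.Perm (Fin D)) (w : Fin D → ℝ) (hw : ∀ i, w i = z (e i))
    (hsort : ∀ i j : Fin D, i ≤ j → w j ≤ w i)
    (g : Fin D)
    (hg : 0 < w g + (1 - ∑ i ∈ Finset.univ.filter (· ≤ g), w i) / (g.1 + 1 : ℝ))
    (hgmax : ∀ j : Fin D,
      0 < w j + (1 - ∑ i ∈ Finset.univ.filter (· ≤ j), w i) / (j.1 + 1 : ℝ) → j ≤ g) :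
    (∀ i, 0 ≤ max (z i + (1 - ∑ i ∈ Finset.univ.filter (· ≤ g), w i) / (g.1 + 1 : ℝ)) 0) ∧
    (∑ i, max (z i + (1 - ∑ i ∈ Finset.univ.filter (· ≤ g), w i) / (g.1 + 1 : ℝ)) 0) = 1 ∧
    (∀ θ' : Fin D → ℝ, (∀ i, 0 ≤ θ' i) → (∑ i, θ' i) = 1 →
      Real.sqrt (∑ i, (max (z i + (1 - ∑ i ∈ Finset.univ.filter (· ≤ g), w i) /
            (g.1 + 1 : ℝ)) 0 - z i) ^ 2) ≤
        Real.sqrt (∑ i, (θ' i - z i) ^ 2)) ∧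
    (∀ θ' : Fin D → ℝ, (∀ i, 0 ≤ θ' i) → (∑ i, θ' i) = 1 →
      Real.sqrt (∑ i, (θ' i - z i) ^ 2) =
        Real.sqrt (∑ i, (max (z i + (1 - ∑ i ∈ Finset.univ.filter (· ≤ g), w i) /
            (g.1 + 1 : ℝ)) 0 - z i) ^ 2) →
      θ' = fun i => max (z i + (1 - ∑ i ∈ Finset.univ.filter (· ≤ g), w i) /
            (g.1 + 1 : ℝ)) 0) :=
  projection_onto_simplex_general D z e w hw hsort g hg hgmax
end
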